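/- For u ∈ ℝ⁴ with u ≠ 0, the kernel of the transpose of the Jacobian (∂π/∂u)(u)ᵀ (a 4×3 linear map from ℝ³ to ℝ⁴) is trivial; equivalently, the 3×4 Jacobian matrix ∂π/∂u has full rank 3 at every u ≠ 0. -/
import Mathlib

open Matrix

/-- The 3×4 Jacobian matrix of the KS projection
`π(u) = (u₁²-u₂²-u₃²+u₄², 2u₁u₂-2u₃u₄, 2u₃u₁+2u₄u₂)`. -/
noncomputable def ksJac (u : Fin 4 → ℝ) : Matrix (Fin 3) (Fin 4) ℝ :=
  !![2 * u 0, -2 * u 1, -2 * u 2, 2 * u 3;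
     2 * u 1, 2 * u 0, -2 * u 3, -2 * u 2;
     2 * u 2, 2 * u 3, 2 * u 0, 2 * u 1]

lemma ksJac_ker (u : Fin 4 → ℝ) (hu : u ≠ 0) :
    ∀ v : Fin 3 → ℝ, (ksJac u)ᵀ.mulVec v = 0 → v = 0 := by
  intro v hv
  have hq : 0 < u 0 ^ 2 + u 1 ^ 2 + u 2 ^ 2 + u 3 ^ 2 := by
    rcases (by simpa [funext_iff, Fin.forall_fin_succ] using hu :
        ¬ (u 0 = 0 ∧ u 1 = 0 ∧ u 2 = 0 ∧ u 3 = 0)) with h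
    by_contra hle
    push_neg at hle
    have h0 : u 0 = 0 := by nlinarith [sq_nonneg (u 0), sq_nonneg (u 1), sq_nonneg (u 2), sq_nonneg (u 3)]
    have h1 : u 1 = 0 := by nlinarith [sq_nonneg (u 0), sq_nonneg (u 1), sq_nonneg (u 2), sq_nonneg (u 3)]
    have h2 : u 2 = 0 := by nlinarith [sq_nonneg (u 0), sq_nonneg (u 1), sq_nonneg (u 2), sq_nonneg (u 3)]
    have h3 : u 3 = 0 := by nlinarith [sq_nonneg (u 0), sq_nonneg (u 1), sq_nonneg (u 2), sq_nonneg (u 3)]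
    exact h ⟨h0, h1, h2, h3⟩
  have e0 := congrFun hv 0
  have e1 := congrFun hv 1
  have e2 := congrFun hv 2
  have e3 := congrFun hv 3
  simp [ksJac, mulVec, dotProduct, Fin.sum_univ_succ] at e0 e1 e2 e3
  have hq' : u 0 ^ 2 + u 1 ^ 2 + u 2 ^ 2 + u 3 ^ 2 ≠ 0 := ne_of_gt hq
  funext i
  fin_cases i <;> simp
  · have : (u 0 ^ 2 + u 1 ^ 2 + u 2 ^ 2 + u 3 ^ 2) * (2 * v 0) = 0 := by
      linear_combination u 0 * e0 - u 1 * e1 - u 2 * e2 + u 3 * e3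
    rcases mul_eq_zero.mp this with h | h
    · exact absurd h hq'
    · linarith
  · have : (u 0 ^ 2 + u 1 ^ 2 + u 2 ^ 2 + u 3 ^ 2) * (2 * v 1) = 0 := by
      linear_combination u 1 * e0 + u 0 * e1 - u 3 * e2 - u 2 * e3
    rcases mul_eq_zero.mp this with h | h
    · exact absurd h hq'
    · linarith
  · have : (u 0 ^ 2 + u 1 ^ 2 + u 2 ^ 2 + u 3 ^ 2) * (2 * v 2) = 0 := by
      linear_combination u 2 * e0 + u 3 * e1 + u 0 * e2 + u 1 * e3
    rcases mul_eq_zero.mp this with h | h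
    · exact absurd h hq'
    · linarith

/-- For `u ≠ 0` the kernel of the transposed Jacobian is trivial; equivalently
the Jacobian has full rank 3. -/
theorem ksJac_transpose_ker_trivial (u : Fin 4 → ℝ) (hu : u ≠ 0) :
    (∀ v : Fin 3 → ℝ, (ksJac u)ᵀ.mulVec v = 0 → v = 0) ∧ (ksJac u).rank = 3 := by
  refine ⟨ksJac_ker u hu, ?_⟩
  have hinj : Function.Injective ((ksJac u)ᵀ.mulVecLin) := by
    rw [← LinearMap.ker_eq_bot, LinearMap.ker_eq_bot']
    intro v hv
    exact ksJac_ker u hu v hv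
  rw [← Matrix.rank_transpose]
  calc (ksJac u)ᵀ.rank = Module.finrank ℝ (LinearMap.range (ksJac u)ᵀ.mulVecLin) := rfl
    _ = 3 := by
        rw [LinearMap.finrank_range_of_inj hinj]
        simp [Module.finrank_fintype_fun_eq_card]
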